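/- arXiv:1204.1186 — 6 statements merged into one kernel-verified Lean document; each statement's English description precedes it below -/
import Mathlib

section
/- One has the cardinality identity |Y_{r,l}^aff| = l · |P_l(r)| = r · |P_r(l)|; equivalently, l · C(r+l-1, r-1) = r · C(r+l-1, l-1). -/
/-- A Young diagram: a weakly decreasing sequence of nonnegative integers. -/
def IsYoung (y : ℕ → ℕ) : Prop := ∀ i j : ℕ, i ≤ j → y j ≤ y i

/-- `Y ∈ 𝒴_{r,l}^{aff}`: weakly decreasing, supported on the first r entries,
with `y_1 - y_r ≤ l` and `y_r ≤ l - 1`. -/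
def IsYaff (r l : ℕ) (y : ℕ → ℕ) : Prop :=
  IsYoung y ∧ (∀ i, r ≤ i → y i = 0) ∧ y 0 - y (r - 1) ≤ l ∧ y (r - 1) + 1 ≤ l

/-- Telescoping sum of successive differences for a weakly decreasing sequence. -/
lemma tele_sum (y : ℕ → ℕ) (hy : IsYoung y) (i : ℕ) :
    ∀ m, i ≤ m → (∑ j ∈ Finset.Ico i m, (y j - y (j + 1))) = y i - y m := by
  intro m
  induction m with
  | zero => intro h; interval_cases i; simp
  | succ m ih =>
    intro h
    rcases Nat.lt_or_ge i (m + 1) with h' | h'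
    · have him : i ≤ m := Nat.lt_succ_iff.mp h'
      rw [Finset.sum_Ico_succ_top him, ih him]
      exact tsub_add_tsub_cancel (hy i m him) (hy m (m + 1) (Nat.le_succ m))
    · have : i = m + 1 := le_antisymm h h'
      subst this; simp

/-- Extension of a tuple on `Fin k` to `ℕ` by zero. -/
def extT {k : ℕ} (μ : Fin k → ℕ) (j : ℕ) : ℕ :=
  if h : j < k then μ ⟨j, h⟩ else 0

/-- The inverse construction: a Young diagram from a base value and differences. -/
def mkY (r c : ℕ) {k : ℕ} (μ : Fin k → ℕ) (i : ℕ) : ℕ :=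
  if i < r then c + ∑ j ∈ Finset.Ico i (r - 1), extT μ j else 0

lemma sum_ext {k : ℕ} (μ : Fin k → ℕ) :
    (∑ j ∈ Finset.Ico 0 k, extT μ j) = ∑ i : Fin k, μ i := by
  rw [← Finset.range_eq_Ico, ← Fin.sum_univ_eq_sum_range (extT μ) k]
  refine Finset.sum_congr rfl fun i _ => ?_
  simp [extT, i.isLt]

lemma mkY_isYaff (r l c : ℕ) (hr : 1 ≤ r) (hc : c < l) (μ : Fin (r - 1) → ℕ)
    (hμ : ∑ i, μ i ≤ l) : IsYaff r l (mkY r c μ) := by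
  refine ⟨?_, ?_, ?_, ?_⟩
  · intro i j hij
    unfold mkY
    by_cases hj : j < r
    · have hi : i < r := lt_of_le_of_lt hij hj
      rw [if_pos hi, if_pos hj]
      refine Nat.add_le_add_left ?_ c
      exact Finset.sum_le_sum_of_subset (Finset.Ico_subset_Ico hij le_rfl)
    · rw [if_neg hj]; exact Nat.zero_le _
  · intro i hi; unfold mkY; rw [if_neg (by omega)]
  · unfold mkY
    rw [if_pos (show 0 < r by omega), if_pos (show r - 1 < r by omega),
      Finset.Ico_self, Finset.sum_empty, sum_ext]
    omega
  · unfold mkY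
    rw [if_pos (by omega), Finset.Ico_self, Finset.sum_empty]
    omega

/-- The key bijection `𝒴_{r,l}^{aff} ≃ Fin l × P_l(r)`. -/
noncomputable def yaffEquiv (r l : ℕ) (hr : 1 ≤ r) :
    {y : ℕ → ℕ // IsYaff r l y} ≃ Fin l × {μ : Fin (r - 1) → ℕ // ∑ i, μ i ≤ l} where
  toFun y := (⟨y.1 (r - 1), y.2.2.2.2⟩,
    ⟨fun i => y.1 i - y.1 (i + 1), by
      calc (∑ i : Fin (r - 1), (y.1 i - y.1 ((i : ℕ) + 1)))
          = ∑ j ∈ Finset.range (r - 1), (y.1 j - y.1 (j + 1)) :=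
            Fin.sum_univ_eq_sum_range (fun j => y.1 j - y.1 (j + 1)) (r - 1)
        _ = y.1 0 - y.1 (r - 1) := by
            rw [Finset.range_eq_Ico]
            exact tele_sum y.1 y.2.1 0 (r - 1) (Nat.zero_le _)
        _ ≤ l := y.2.2.2.1⟩)
  invFun p := ⟨mkY r p.1 p.2.1, mkY_isYaff r l p.1 hr p.1.isLt p.2.1 p.2.2⟩
  left_inv := by
    rintro ⟨y, hy⟩
    ext i
    simp only [mkY]
    by_cases hi : i < r
    · rw [if_pos hi]
      have hee : ∀ j ∈ Finset.Ico i (r - 1),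
          extT (fun i : Fin (r - 1) => y i - y ((i : ℕ) + 1)) j = y j - y (j + 1) := by
        intro j hj
        have : j < r - 1 := (Finset.mem_Ico.mp hj).2
        simp [extT, this]
      rw [Finset.sum_congr rfl hee, tele_sum y hy.1 i (r - 1) (by omega)]
      have := hy.1 i (r - 1) (by omega)
      omega
    · rw [if_neg hi]
      exact (hy.2.1 i (by omega)).symm
  right_inv := by
    rintro ⟨c, μ, hμ⟩
    refine Prod.ext ?_ ?_
    · apply Fin.ext
      simp only [mkY]
      rw [if_pos (by omega), Finset.Ico_self, Finset.sum_empty]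
      simp
    · apply Subtype.ext
      funext i
      have hi1 : (i : ℕ) < r - 1 := i.isLt
      simp only [mkY]
      rw [if_pos (by omega), if_pos (by omega)]
      rw [Finset.sum_eq_sum_Ico_succ_bot (by omega : (i : ℕ) < r - 1)]
      have : extT μ (i : ℕ) = μ i := by simp [extT, hi1]
      omega

/-- The slack-variable bijection for stars and bars. -/
def slackEquiv (k n : ℕ) :
    {μ : Fin k → ℕ // ∑ i, μ i ≤ n} ≃ {ν : Fin (k + 1) → ℕ // ∑ i, ν i = n} where
  toFun μ := ⟨Fin.cons (n - ∑ i, μ.1 i) μ.1, by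
    rw [Fin.sum_univ_succ]
    simp only [Fin.cons_zero, Fin.cons_succ]
    omega⟩
  invFun ν := ⟨fun i => ν.1 i.succ, by
    show (∑ i : Fin k, ν.1 i.succ) ≤ n
    have := ν.2
    rw [Fin.sum_univ_succ] at this
    omega⟩
  left_inv μ := by
    apply Subtype.ext
    funext i
    simp [Fin.cons_succ]
  right_inv ν := by
    apply Subtype.ext
    funext i
    refine Fin.cases ?_ ?_ i
    · have := ν.2
      rw [Fin.sum_univ_succ] at this
      simp only [Fin.cons_zero]
      omega
    · intro j; simp [Fin.cons_succ]

lemma card_P (k n : ℕ) :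
    Nat.card {μ : Fin k → ℕ // ∑ i, μ i ≤ n} = Nat.choose (n + k) k := by
  have e : {μ : Fin k → ℕ // ∑ i, μ i ≤ n} ≃ Sym (Fin (k + 1)) n :=
    (slackEquiv k n).trans (Sym.equivNatSumOfFintype (Fin (k + 1)) n).symm
  rw [Nat.card_congr e, Nat.card_eq_fintype_card, Sym.card_sym_eq_choose]
  rw [Fintype.card_fin]
  have h1 : k + 1 + n - 1 = n + k := by omega
  rw [h1, Nat.choose_symm_add]

lemma choose_identity (r l : ℕ) (hr : 1 ≤ r) (hl : 1 ≤ l) :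
    l * Nat.choose (r + l - 1) (r - 1) = r * Nat.choose (r + l - 1) (l - 1) := by
  obtain ⟨a, rfl⟩ : ∃ a, r = a + 1 := ⟨r - 1, by omega⟩
  obtain ⟨b, rfl⟩ : ∃ b, l = b + 1 := ⟨l - 1, by omega⟩
  simp only [Nat.add_sub_cancel]
  have key : (a + 1 + (b + 1) - 1) = a + b + 1 := by omega
  rw [key]
  have h1 := Nat.choose_mul_factorial_mul_factorial (show a ≤ a + b + 1 by omega)
  have h2 := Nat.choose_mul_factorial_mul_factorial (show b ≤ a + b + 1 by omega)
  rw [show a + b + 1 - a = b + 1 by omega] at h1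
  rw [show a + b + 1 - b = a + 1 by omega] at h2
  rw [Nat.factorial_succ (b)] at h1
  rw [Nat.factorial_succ (a)] at h2
  have e1 : (b + 1) * (a + b + 1).choose a * (a.factorial * b.factorial)
      = (a + b + 1).factorial := by rw [← h1]; ring
  have e2 : (a + 1) * (a + b + 1).choose b * (a.factorial * b.factorial)
      = (a + b + 1).factorial := by rw [← h2]; ring
  have hpos : 0 < a.factorial * b.factorial :=
    Nat.mul_pos a.factorial_pos b.factorial_pos
  exact Nat.eq_of_mul_eq_mul_right hpos (e1.trans e2.symm)

/-- `|𝒴_{r,l}^{aff}| = l·|P_l(r)| = r·|P_r(l)|`; equivalently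
`l·C(r+l-1, r-1) = r·C(r+l-1, l-1)`. -/
theorem card_Yaff (r l : ℕ) (hr : 1 ≤ r) (hl : 1 ≤ l) :
    Nat.card {y : ℕ → ℕ // IsYaff r l y}
        = l * Nat.card {μ : Fin (r - 1) → ℕ // ∑ i, μ i ≤ l} ∧
    Nat.card {y : ℕ → ℕ // IsYaff r l y}
        = r * Nat.card {ν : Fin (l - 1) → ℕ // ∑ j, ν j ≤ r} ∧
    l * Nat.choose (r + l - 1) (r - 1) = r * Nat.choose (r + l - 1) (l - 1) := by
  have h1 : Nat.card {y : ℕ → ℕ // IsYaff r l y}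
      = l * Nat.card {μ : Fin (r - 1) → ℕ // ∑ i, μ i ≤ l} := by
    rw [Nat.card_congr (yaffEquiv r l hr), Nat.card_prod, Nat.card_eq_fintype_card,
      Fintype.card_fin]
  have hid := choose_identity r l hr hl
  have hPr : Nat.card {μ : Fin (r - 1) → ℕ // ∑ i, μ i ≤ l}
      = Nat.choose (r + l - 1) (r - 1) := by
    have he : l + (r - 1) = r + l - 1 := by clear h1 hid; omega
    have h := card_P (r - 1) l
    rw [he] at h
    exact h
  have hPl : Nat.card {ν : Fin (l - 1) → ℕ // ∑ j, ν j ≤ r}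
      = Nat.choose (r + l - 1) (l - 1) := by
    have he : r + (l - 1) = r + l - 1 := by clear h1 hid hPr; omega
    have h := card_P (l - 1) r
    rw [he] at h
    exact h
  refine ⟨h1, ?_, hid⟩
  rw [h1, hPr, hPl, hid]
end

section
/- For any fixed λ ∈ ℤ/rlℤ and any μ ∈ P_l(r), there is at most one Young diagram Y ∈ Y_{r,l}^aff with π(Y) = μ and |Y| ≡ λ (mod rl); equivalently, the map Y ↦ (π(Y), |Y| mod rl) is injective on Y_{r,l}^aff. -/
/-- The map `Y ↦ (π(Y), |Y| mod rl)` is injective on `𝒴_{r,l}^{aff}`: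
a diagram in `𝒴_{r,l}^{aff}` is determined by its weight
`π(Y) = (y_1-y_2, …, y_{r-1}-y_r)` together with its size modulo `rl`. -/
theorem pi_size_injective (r l : ℕ) (hr : 2 ≤ r) (hl : 2 ≤ l) :
    ∀ y z : ℕ → ℕ, IsYaff r l y → IsYaff r l z →
      (∀ i, i < r - 1 → y i - y (i + 1) = z i - z (i + 1)) →
      ((∑ i ∈ Finset.range r, y i : ZMod (r * l))
        = (∑ i ∈ Finset.range r, z i : ZMod (r * l))) →
      y = z := by
  intro y z hy hz hdiff hsum
  obtain ⟨hyY, hy0, _, hylt⟩ := hy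
  obtain ⟨hzY, hz0, _, hzlt⟩ := hz
  set c : ℤ := (y (r-1) : ℤ) - z (r-1) with hc
  -- integer version of difference equality
  have hdiffZ : ∀ i, i < r - 1 → (y i : ℤ) - y (i+1) = (z i : ℤ) - z (i+1) := by
    intro i hi
    have h1 : y (i+1) ≤ y i := hyY i (i+1) (Nat.le_succ i)
    have h2 : z (i+1) ≤ z i := hzY i (i+1) (Nat.le_succ i)
    have := hdiff i hi
    omega
  have key : ∀ k, k ≤ r - 1 → (y (r-1-k) : ℤ) - z (r-1-k) = c := by
    intro k hk
    induction k with
    | zero => simp [hc]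
    | succ n ih =>
      have hn := ih (by omega)
      have hi : r - 1 - (n+1) < r - 1 := by omega
      have he : r - 1 - (n+1) + 1 = r - 1 - n := by omega
      have := hdiffZ (r - 1 - (n+1)) hi
      rw [he] at this
      linarith
  have keyi : ∀ i, i < r → (y i : ℤ) = (z i : ℤ) + c := by
    intro i hi
    have := key (r - 1 - i) (by omega)
    have he : r - 1 - (r - 1 - i) = i := by omega
    rw [he] at this
    linarith
  -- sum relation over ℤ
  have hs : (∑ i ∈ Finset.range r, (y i : ℤ))
      = (∑ i ∈ Finset.range r, (z i : ℤ)) + r * c := by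
    have : (∑ i ∈ Finset.range r, (y i : ℤ))
        = ∑ i ∈ Finset.range r, ((z i : ℤ) + c) := by
      apply Finset.sum_congr rfl
      intro i hi
      exact keyi i (Finset.mem_range.mp hi)
    rw [this, Finset.sum_add_distrib, Finset.sum_const, Finset.card_range]
    ring
  -- pass to ZMod (r*l)
  have hz0' : ((r : ZMod (r*l)) * (c : ZMod (r*l)) = 0) := by
    have := congrArg (fun t : ℤ => (t : ZMod (r*l))) hs
    push_cast at this hsum
    rw [hsum] at this
    linear_combination -this
  have hdvd : ((r : ℤ) * l) ∣ (r : ℤ) * c := by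
    have : (((r : ℤ) * c : ℤ) : ZMod (r*l)) = 0 := by push_cast; exact hz0'
    have h2 := (ZMod.intCast_zmod_eq_zero_iff_dvd _ _).mp this
    exact_mod_cast h2
  have hldvd : (l : ℤ) ∣ c := by
    rcases hdvd with ⟨t, ht⟩
    refine ⟨t, ?_⟩
    have hrpos : (0:ℤ) < r := by exact_mod_cast Nat.lt_of_lt_of_le (by norm_num) hr
    have : (r : ℤ) * c = (r : ℤ) * (l * t) := by linarith [ht]
    exact mul_left_cancel₀ (ne_of_gt hrpos) this
  have hc0 : c = 0 := by
    have h1 : (y (r-1) : ℤ) + 1 ≤ l := by exact_mod_cast hylt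
    have h2 : (z (r-1) : ℤ) + 1 ≤ l := by exact_mod_cast hzlt
    have h3 : (0:ℤ) ≤ (y (r-1) : ℤ) := Int.natCast_nonneg _
    have h4 : (0:ℤ) ≤ (z (r-1) : ℤ) := Int.natCast_nonneg _
    have habs : |c| < l := by
      rw [abs_lt]; constructor <;> simp only [hc] <;> linarith
    exact Int.eq_zero_of_abs_lt_dvd hldvd habs
  funext i
  by_cases hi : i < r
  · have := keyi i hi
    rw [hc0, add_zero] at this
    exact_mod_cast this
  · rw [hy0 i (by omega), hz0 i (by omega)]
end

section
/- The fiber of π over μ ∈ P_l(r) inside Y_{r,l}^aff consists exactly of the l diagrams Y^{(k)} given by y_i^{(k)} = (Σ_{j=i}^{r-1} μ_j) + k for k = 0, 1, ..., l-1, and their sizes |Y^{(k)}| = |Y^{(0)}| + kr are pairwise distinct modulo rl. -/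
/-- The diagram `Y^{(k)}` over the weight `μ`:
`y_i^{(k)} = (Σ_{j=i}^{r-1} μ_j) + k` (0-based rows `i < r`). -/
def Yk (r : ℕ) (μ : ℕ → ℕ) (k : ℕ) : ℕ → ℕ :=
  fun i => if i < r then (∑ j ∈ Finset.Ico i (r - 1), μ j) + k else 0

/-- The fiber of `π` over `μ ∈ P_l(r)` inside `𝒴_{r,l}^{aff}` consists exactly
of the `l` diagrams `Y^{(k)}`, `k = 0,…,l-1`; their sizes are
`|Y^{(0)}| + k·r`, pairwise distinct modulo `rl`. -/
theorem fiber_description (r l : ℕ) (hr : 1 ≤ r) (hl : 1 ≤ l) (μ : ℕ → ℕ)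
    (hμ0 : ∀ i, r - 1 ≤ i → μ i = 0)
    (hμ : ∑ i ∈ Finset.range (r - 1), μ i ≤ l) :
    (∀ k, k < l → IsYaff r l (Yk r μ k) ∧
      ∀ i, i < r - 1 → Yk r μ k i - Yk r μ k (i + 1) = μ i) ∧
    (∀ y : ℕ → ℕ, IsYaff r l y → (∀ i, i < r - 1 → y i - y (i + 1) = μ i) →
      ∃ k, k < l ∧ y = Yk r μ k) ∧
    (∀ k, ∑ i ∈ Finset.range r, Yk r μ k i
        = (∑ i ∈ Finset.range r, Yk r μ 0 i) + k * r) ∧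
    (∀ k k', k < l → k' < l →
      ((∑ i ∈ Finset.range r, Yk r μ k i : ZMod (r * l))
        = (∑ i ∈ Finset.range r, Yk r μ k' i : ZMod (r * l))) → k = k') := by
  have hYk : ∀ k i, i < r → Yk r μ k i = (∑ j ∈ Finset.Ico i (r-1), μ j) + k :=
    fun k i h => if_pos h
  have hYk0 : ∀ k i, r ≤ i → Yk r μ k i = 0 :=
    fun k i h => if_neg (by omega)
  have hSstep : ∀ i, i < r - 1 → (∑ j ∈ Finset.Ico i (r-1), μ j)
      = μ i + ∑ j ∈ Finset.Ico (i+1) (r-1), μ j := by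
    intro i hi
    rw [Finset.sum_eq_sum_Ico_succ_bot hi]
  have hSlast : (∑ j ∈ Finset.Ico (r-1) (r-1), μ j) = 0 := by simp
  have hS0 : (∑ j ∈ Finset.Ico 0 (r-1), μ j) ≤ l := by
    rwa [← Finset.range_eq_Ico]
  have hmono : ∀ i j, i ≤ j →
      (∑ x ∈ Finset.Ico j (r-1), μ x) ≤ ∑ x ∈ Finset.Ico i (r-1), μ x := by
    intro i j hij
    exact Finset.sum_le_sum_of_subset (Finset.Ico_subset_Ico hij le_rfl)
  have hsum : ∀ k, ∑ i ∈ Finset.range r, Yk r μ k i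
      = (∑ i ∈ Finset.range r, ∑ j ∈ Finset.Ico i (r-1), μ j) + k * r := by
    intro k
    rw [Finset.sum_congr rfl (fun i hi => hYk k i (Finset.mem_range.mp hi)),
      Finset.sum_add_distrib, Finset.sum_const, Finset.card_range,
      smul_eq_mul, Nat.mul_comm]
  refine ⟨?_, ?_, ?_, ?_⟩
  · intro k hk
    constructor
    · refine ⟨?_, fun i hi => hYk0 k i hi, ?_, ?_⟩
      · intro i j hij
        by_cases hj : j < r
        · rw [hYk k i (lt_of_le_of_lt hij hj), hYk k j hj]
          exact Nat.add_le_add_right (hmono i j hij) k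
        · rw [hYk0 k j (by omega)]; exact Nat.zero_le _
      · rw [hYk k 0 (by omega), hYk k (r-1) (by omega), hSlast]
        omega
      · rw [hYk k (r-1) (by omega), hSlast]
        omega
    · intro i hi
      rw [hYk k i (by omega), hYk k (i+1) (by omega), hSstep i hi]
      omega
  · rintro y ⟨hyoung, hzero, -, hlast⟩ hdiff
    refine ⟨y (r-1), by omega, ?_⟩
    have key : ∀ m, m ≤ r - 1 →
        y (r-1-m) = (∑ j ∈ Finset.Ico (r-1-m) (r-1), μ j) + y (r-1) := by
      intro m
      induction m with
      | zero => simp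
      | succ n ih =>
        intro hn
        have hi : r-1-(n+1) < r-1 := by omega
        have hsucc : r-1-(n+1)+1 = r-1-n := by omega
        have h1 := hdiff (r-1-(n+1)) hi
        have h2 := hyoung (r-1-(n+1)) (r-1-(n+1)+1) (by omega)
        rw [hsucc] at h1 h2
        have h3 := ih (by omega)
        rw [hSstep _ hi, hsucc]
        omega
    funext i
    by_cases hi : i < r
    · rw [hYk _ i hi]
      have h := key (r-1-i) (by omega)
      rw [show r-1-(r-1-i) = i by omega] at h
      exact h
    · rw [hYk0 _ i (by omega)]; exact hzero i (by omega)
  · intro k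
    rw [hsum k, hsum 0]
    omega
  · intro k k' hk hk' heq
    rw [← Nat.cast_sum, ← Nat.cast_sum, hsum k, hsum k'] at heq
    push_cast at heq
    have h2 : ((k*r : ℕ) : ZMod (r*l)) = ((k'*r : ℕ) : ZMod (r*l)) := by
      push_cast
      exact add_left_cancel heq
    rw [ZMod.natCast_eq_natCast_iff] at h2
    have h3 : k*r % (r*l) = k'*r % (r*l) := h2
    have hb : k*r < r*l := by
      calc k*r < l*r := Nat.mul_lt_mul_of_pos_right hk (by omega)
      _ = r*l := Nat.mul_comm l r
    have hb' : k'*r < r*l := by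
      calc k'*r < l*r := Nat.mul_lt_mul_of_pos_right hk' (by omega)
      _ = r*l := Nat.mul_comm l r
    rw [Nat.mod_eq_of_lt hb, Nat.mod_eq_of_lt hb'] at h3
    exact Nat.eq_of_mul_eq_mul_right (by omega) h3
end

section
/- For every pair (λ_0, μ_2) ∈ {0,...,rl-1} × P_r(l) there exists at most one μ_1 ∈ P_l(r) such that the triple (λ_0, μ_1, μ_2) is admissible, i.e. such that there exists Y ∈ Y_{r,l}^aff with |Y| ≡ λ_0 (mod rl), π(Y) = μ_1 and π(^tY) = μ_2. -/
/-- The affine transpose of `Y ∈ 𝒴_{r,l}^{aff}`: write `Y = Y₁ ∪ Y₂` with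
`(Y₁)_i = min(l, y_i)`, `(Y₂)_i = max(y_i - l, 0)`, and set
`(^tY)_j = (^tY₁)_j + (^tY₂)_j` (for `y_1 ≤ l` this is the usual conjugate). -/
def transpAff (r l : ℕ) (y : ℕ → ℕ) : ℕ → ℕ :=
  fun j => if j < l then
    ((Finset.range r).filter (fun i => j + 1 ≤ min (y i) l)).card +
    ((Finset.range r).filter (fun i => j + 1 ≤ y i - l)).card
  else 0

/-- Column count at threshold `j`. -/
def colCnt (r : ℕ) (y : ℕ → ℕ) (j : ℕ) : ℕ :=
  ((Finset.range r).filter (fun i => j ≤ y i)).card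

lemma colCnt_le (r : ℕ) (y : ℕ → ℕ) (j : ℕ) : colCnt r y j ≤ r := by
  unfold colCnt
  exact le_trans (Finset.card_filter_le _ _) (by simp)

lemma colCnt_anti (r : ℕ) (y : ℕ → ℕ) {j k : ℕ} (h : j ≤ k) :
    colCnt r y k ≤ colCnt r y j := by
  apply Finset.card_le_card
  apply Finset.monotone_filter_right
  intro i hi
  omega

lemma card_filter_range_le (a N : ℕ) :
    ((Finset.range N).filter (fun j => j + 1 ≤ a)).card = min a N := by
  have h : (Finset.range N).filter (fun j => j + 1 ≤ a) = Finset.range (min a N) := by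
    ext j
    simp only [Finset.mem_filter, Finset.mem_range]
    omega
  rw [h, Finset.card_range]

/-- For a weakly decreasing `y`, membership above the threshold is
equivalent to the index being below the column count. -/
lemma le_iff_lt_colCnt (r : ℕ) (y : ℕ → ℕ) (hy : IsYoung y) {i : ℕ} (hi : i < r) (j : ℕ) :
    j ≤ y i ↔ i + 1 ≤ colCnt r y j := by
  constructor
  · intro h
    have hsub : Finset.range (i + 1) ⊆ (Finset.range r).filter (fun i' => j ≤ y i') := by
      intro k hk
      simp only [Finset.mem_range] at hk
      simp only [Finset.mem_filter, Finset.mem_range]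
      exact ⟨by omega, le_trans h (hy k i (by omega))⟩
    have := Finset.card_le_card hsub
    simpa [colCnt] using this
  · intro h
    by_contra hc
    push_neg at hc
    have hsub : (Finset.range r).filter (fun i' => j ≤ y i') ⊆ Finset.range i := by
      intro k hk
      simp only [Finset.mem_filter, Finset.mem_range] at hk ⊢
      by_contra hk2
      push_neg at hk2
      have := hy i k hk2
      omega
    have := Finset.card_le_card hsub
    simp only [Finset.card_range] at this
    unfold colCnt at h
    omega

/-- `transpAff` in terms of column counts. -/
lemma transpAff_eq_colCnt (r l : ℕ) (y : ℕ → ℕ) {j : ℕ} (hj : j < l) :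
    transpAff r l y j = colCnt r y (j + 1) + colCnt r y (l + j + 1) := by
  unfold transpAff colCnt
  rw [if_pos hj]
  congr 1
  · congr 1
    apply Finset.filter_congr
    intro i _
    simp only [le_min_iff]
    constructor
    · intro h; exact h.1
    · intro h; exact ⟨h, by omega⟩
  · congr 1
    apply Finset.filter_congr
    intro i _
    constructor <;> intro h <;> omega

lemma y_lt_two_l (r l : ℕ) (y : ℕ → ℕ) (hy : IsYaff r l y) (i : ℕ) : y i < 2 * l := by
  have h1 : y i ≤ y 0 := hy.1 0 i (Nat.zero_le i)
  have h2 := hy.2.2.1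
  have h3 := hy.2.2.2
  omega

/-- If the second block is nonempty in column `j+1+l`, the first block column is full. -/
lemma colCnt_full (r l : ℕ) (hr : 2 ≤ r) (y : ℕ → ℕ) (hy : IsYaff r l y) (j : ℕ)
    (h : 0 < colCnt r y (l + j + 1)) : colCnt r y (j + 1) = r := by
  obtain ⟨i, hi⟩ := Finset.card_pos.mp h
  simp only [Finset.mem_filter, Finset.mem_range] at hi
  have h0 : l + j + 1 ≤ y 0 := le_trans hi.2 (hy.1 0 i (Nat.zero_le i))
  have hr1 : j + 1 ≤ y (r - 1) := by
    have := hy.2.2.1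
    omega
  have hall : (Finset.range r).filter (fun i' => j + 1 ≤ y i') = Finset.range r := by
    apply Finset.filter_true_of_mem
    intro k hk
    simp only [Finset.mem_range] at hk
    have := hy.1 k (r - 1) (by omega)
    omega
  unfold colCnt
  rw [hall, Finset.card_range]

lemma colCnt_from_t (r l : ℕ) (hr : 2 ≤ r) (y : ℕ → ℕ) (hy : IsYaff r l y) {j : ℕ} (hj : j < l) :
    colCnt r y (j + 1) = min (transpAff r l y j) r ∧
    colCnt r y (l + j + 1) = transpAff r l y j - r := by
  have ht := transpAff_eq_colCnt r l y hj
  have h1 := colCnt_le r y (j + 1)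
  have h2 := colCnt_le r y (l + j + 1)
  rcases Nat.eq_zero_or_pos (colCnt r y (l + j + 1)) with h | h
  · constructor <;> omega
  · have := colCnt_full r l hr y hy j h
    constructor <;> omega

/-- Reconstruction of `y` from its affine transpose. -/
lemma reconstruct (r l : ℕ) (hr : 2 ≤ r) (hl : 2 ≤ l) (y : ℕ → ℕ) (hy : IsYaff r l y)
    {i : ℕ} (hi : i < r) :
    y i = ∑ j ∈ Finset.range l,
      ((if i + 1 ≤ min (transpAff r l y j) r then 1 else 0) +
       (if i + 1 ≤ transpAff r l y j - r then 1 else 0)) := by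
  have key : ∀ j ∈ Finset.range l,
      ((if i + 1 ≤ min (transpAff r l y j) r then 1 else 0) +
       (if i + 1 ≤ transpAff r l y j - r then 1 else 0) : ℕ) =
      ((if j + 1 ≤ y i then 1 else 0) + (if l + j + 1 ≤ y i then 1 else 0)) := by
    intro j hj
    simp only [Finset.mem_range] at hj
    obtain ⟨hc1, hc2⟩ := colCnt_from_t r l hr y hy hj
    rw [← hc1, ← hc2]
    simp only [← le_iff_lt_colCnt r y hy.1 hi]
  rw [Finset.sum_congr rfl key, Finset.sum_add_distrib]
  have hA : (∑ j ∈ Finset.range l, (if j + 1 ≤ y i then 1 else 0) : ℕ) = min (y i) l := by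
    rw [← card_filter_range_le (y i) l, Finset.card_filter]
  have hB : (∑ j ∈ Finset.range l, (if l + j + 1 ≤ y i then 1 else 0) : ℕ) = y i - l := by
    have : (∑ j ∈ Finset.range l, (if l + j + 1 ≤ y i then 1 else 0) : ℕ) =
        ∑ j ∈ Finset.range l, (if j + 1 ≤ y i - l then 1 else 0) := by
      apply Finset.sum_congr rfl
      intro j _
      congr 1
      simp only [eq_iff_iff]
      omega
    rw [this, ← Finset.card_filter, card_filter_range_le]
    have := y_lt_two_l r l y hy i
    omega
  rw [hA, hB]
  have := y_lt_two_l r l y hy i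
  rcases le_total (y i) l with h | h
  · rw [min_eq_left h]; omega
  · rw [min_eq_right h]; omega

/-- The total size equals the sum of the transpose columns. -/
lemma sum_eq_sum_transp (r l : ℕ) (hl : 2 ≤ l) (y : ℕ → ℕ) (hy : IsYaff r l y) :
    ∑ i ∈ Finset.range r, y i = ∑ j ∈ Finset.range l, transpAff r l y j := by
  have step : ∀ j ∈ Finset.range l, transpAff r l y j =
      (∑ i ∈ Finset.range r, ((if j + 1 ≤ min (y i) l then 1 else 0) +
        (if j + 1 ≤ y i - l then 1 else 0)) : ℕ) := by
    intro j hj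
    simp only [Finset.mem_range] at hj
    unfold transpAff
    rw [if_pos hj, Finset.card_filter, Finset.card_filter, ← Finset.sum_add_distrib]
  rw [Finset.sum_congr rfl step, Finset.sum_comm]
  apply Finset.sum_congr rfl
  intro i _
  rw [Finset.sum_add_distrib]
  have hA : (∑ j ∈ Finset.range l, (if j + 1 ≤ min (y i) l then 1 else 0) : ℕ)
      = min (y i) l := by
    rw [← Finset.card_filter, card_filter_range_le]
    omega
  have hB : (∑ j ∈ Finset.range l, (if j + 1 ≤ y i - l then 1 else 0) : ℕ) = y i - l := by
    rw [← Finset.card_filter, card_filter_range_le]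
    have := y_lt_two_l r l y hy i
    omega
  rw [hA, hB]
  rcases le_total (y i) l with h | h
  · rw [min_eq_left h]; omega
  · rw [min_eq_right h]; omega

lemma transp_anti (r l : ℕ) (y : ℕ → ℕ) {j : ℕ} (hj : j + 1 < l) :
    transpAff r l y (j + 1) ≤ transpAff r l y j := by
  rw [transpAff_eq_colCnt r l y (j := j + 1) (by omega : j + 1 < l),
    transpAff_eq_colCnt r l y (j := j) (by omega : j < l)]
  have h1 := colCnt_anti r y (show j + 1 ≤ j + 1 + 1 by omega)
  have h2 := colCnt_anti r y (show l + j + 1 ≤ l + (j + 1) + 1 by omega)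
  omega

/-- Telescoping: the transpose column is the bottom value plus partial sums of `μ₂`. -/
lemma transp_formula (r l : ℕ) (y : ℕ → ℕ) (μ₂ : ℕ → ℕ)
    (hμ : ∀ j, j < l - 1 → transpAff r l y j - transpAff r l y (j + 1) = μ₂ j) :
    ∀ d j, j + d = l - 1 →
      transpAff r l y j = transpAff r l y (l - 1) + ∑ j' ∈ Finset.Ico j (l - 1), μ₂ j' := by
  intro d
  induction d with
  | zero =>
    intro j hj
    subst hj
    simp
  | succ n ih =>
    intro j hj
    have hjl : j < l - 1 := by omega
    have hstep := hμ j hjl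
    have hmono := transp_anti r l y (show j + 1 < l by omega)
    have hih := ih (j + 1) (by omega)
    rw [Finset.sum_eq_sum_Ico_succ_bot (show j < l - 1 by omega)]
    omega

/-- For every pair `(λ₀, μ₂) ∈ ℤ/rlℤ × P_r(l)` there is at most one
`μ₁ ∈ P_l(r)` such that `(λ₀, μ₁, μ₂)` is admissible: if `Y, Z ∈ 𝒴_{r,l}^{aff}`
have the same size mod `rl` and `π(^tY) = π(^tZ) = μ₂`, then `π(Y) = π(Z)`. -/
theorem at_most_one_mu1 (r l : ℕ) (hr : 2 ≤ r) (hl : 2 ≤ l)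
    (lam : ℕ) (hlam : lam < r * l) (μ₂ : ℕ → ℕ)
    (h2 : ∀ j, l - 1 ≤ j → μ₂ j = 0)
    (h2s : ∑ j ∈ Finset.range (l - 1), μ₂ j ≤ r) :
    ∀ y z : ℕ → ℕ, IsYaff r l y → IsYaff r l z →
      ((∑ i ∈ Finset.range r, y i : ZMod (r * l)) = (lam : ZMod (r * l))) →
      ((∑ i ∈ Finset.range r, z i : ZMod (r * l)) = (lam : ZMod (r * l))) →
      (∀ j, j < l - 1 → transpAff r l y j - transpAff r l y (j + 1) = μ₂ j) →
      (∀ j, j < l - 1 → transpAff r l z j - transpAff r l z (j + 1) = μ₂ j) →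
      ∀ i, i < r - 1 → y i - y (i + 1) = z i - z (i + 1) := by
  intro y z hy hz hsy hsz hty htz i hir
  -- the bottom values
  set my := transpAff r l y (l - 1) with hmy
  set mz := transpAff r l z (l - 1) with hmz
  -- the telescoping formulas
  have hfy : ∀ j, j < l → transpAff r l y j = my + ∑ j' ∈ Finset.Ico j (l - 1), μ₂ j' := by
    intro j hj
    exact transp_formula r l y μ₂ hty (l - 1 - j) j (by omega)
  have hfz : ∀ j, j < l → transpAff r l z j = mz + ∑ j' ∈ Finset.Ico j (l - 1), μ₂ j' := by
    intro j hj
    exact transp_formula r l z μ₂ htz (l - 1 - j) j (by omega)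
  -- bound the bottom values
  have hbound : ∀ w : ℕ → ℕ, IsYaff r l w → transpAff r l w (l - 1) ≤ r - 1 := by
    intro w hw
    have h1 : l - 1 < l := by omega
    rw [transpAff_eq_colCnt r l w h1]
    have hz2 : colCnt r w (l + (l - 1) + 1) = 0 := by
      unfold colCnt
      rw [Finset.card_eq_zero, Finset.filter_eq_empty_iff]
      intro k _
      have := y_lt_two_l r l w hw k
      omega
    have hc1 : colCnt r w (l - 1 + 1) ≤ r - 1 := by
      by_contra hc
      push_neg at hc
      have hcr : r - 1 + 1 ≤ colCnt r w (l - 1 + 1) := by omega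
      have := (le_iff_lt_colCnt r w hw.1 (show r - 1 < r by omega) (l - 1 + 1)).mpr hcr
      have := hw.2.2.2
      omega
    omega
  have hby := hbound y hy
  have hbz := hbound z hz
  -- total sizes
  set C := ∑ j ∈ Finset.range l, ∑ j' ∈ Finset.Ico j (l - 1), μ₂ j' with hCdef
  have hCy : ∑ i ∈ Finset.range r, y i = l * my + C := by
    rw [sum_eq_sum_transp r l hl y hy,
      Finset.sum_congr rfl (fun j hj => hfy j (Finset.mem_range.mp hj)),
      Finset.sum_add_distrib, Finset.sum_const, Finset.card_range, smul_eq_mul]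
  have hCz : ∑ i ∈ Finset.range r, z i = l * mz + C := by
    rw [sum_eq_sum_transp r l hl z hz,
      Finset.sum_congr rfl (fun j hj => hfz j (Finset.mem_range.mp hj)),
      Finset.sum_add_distrib, Finset.sum_const, Finset.card_range, smul_eq_mul]
  -- compare sizes mod rl
  have hcast : ((l * my : ℕ) : ZMod (r * l)) = ((l * mz : ℕ) : ZMod (r * l)) := by
    have h1 : ((l * my + C : ℕ) : ZMod (r * l)) = ((l * mz + C : ℕ) : ZMod (r * l)) := by
      rw [← hCy, ← hCz]
      push_cast
      rw [hsy, hsz]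
    push_cast at h1 ⊢
    exact add_right_cancel h1
  have hby' : my ≤ r - 1 := by rw [hmy]; exact hby
  have hbz' : mz ≤ r - 1 := by rw [hmz]; exact hbz
  have hmul : ∀ m : ℕ, m ≤ r - 1 → l * m < r * l := by
    intro m hmlt
    calc l * m < l * m + l := by omega
      _ = l * (m + 1) := by ring
      _ ≤ l * r := Nat.mul_le_mul_left l (by omega)
      _ = r * l := Nat.mul_comm _ _
  have hlt1 : l * my < r * l := hmul my hby'
  have hlt2 : l * mz < r * l := hmul mz hbz'
  have hrl : NeZero (r * l) := ⟨by positivity⟩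
  have hval := congrArg ZMod.val hcast
  rw [ZMod.val_cast_of_lt hlt1, ZMod.val_cast_of_lt hlt2] at hval
  have hm : my = mz := Nat.eq_of_mul_eq_mul_left (by omega) hval
  -- the transposes coincide
  have htt : transpAff r l y = transpAff r l z := by
    funext j
    by_cases hj : j < l
    · rw [hfy j hj, hfz j hj, hm]
    · unfold transpAff
      rw [if_neg hj, if_neg hj]
  -- hence y = z on range r
  have hyz : ∀ k, k < r → y k = z k := by
    intro k hk
    rw [reconstruct r l hr hl y hy hk, reconstruct r l hr hl z hz hk, htt]
  rw [hyz i (by omega), hyz (i + 1) (by omega)]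
end

section
/- For an admissible triple (λ_0, μ_1, μ_2), the witnessing Young diagram Y ∈ Y_{r,l}^aff is uniquely determined by the pair (λ_0, μ_1), and also uniquely determined by the pair (λ_0, μ_2). -/
/- ------------------ auxiliary lemmas ------------------ -/

lemma count_range (c n : ℕ) :
    ((Finset.range n).filter (fun j => j + 1 ≤ c)).card = min c n := by
  have h : (Finset.range n).filter (fun j => j + 1 ≤ c) = Finset.range (min c n) := by
    ext x
    simp only [Finset.mem_filter, Finset.mem_range]
    omega
  rw [h, Finset.card_range]

lemma conj_iff (r c i : ℕ) (hi : i < r) (f : ℕ → ℕ)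
    (hf : ∀ p q : ℕ, p ≤ q → f q ≤ f p) :
    (i + 1 ≤ ((Finset.range r).filter (fun i' => c ≤ f i')).card) ↔ c ≤ f i := by
  constructor
  · intro h
    by_contra hc
    push_neg at hc
    have hsub : (Finset.range r).filter (fun i' => c ≤ f i') ⊆ Finset.range i := by
      intro x hx
      simp only [Finset.mem_filter, Finset.mem_range] at hx ⊢
      by_contra hxi
      push_neg at hxi
      have := hf i x hxi
      omega
    have := Finset.card_le_card hsub
    rw [Finset.card_range] at this
    omega
  · intro h
    have hsub : Finset.range (i + 1) ⊆ (Finset.range r).filter (fun i' => c ≤ f i') := by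
      intro x hx
      simp only [Finset.mem_range] at hx
      simp only [Finset.mem_filter, Finset.mem_range]
      exact ⟨by omega, le_trans h (hf x i (by omega))⟩
    have := Finset.card_le_card hsub
    rwa [Finset.card_range] at this

/-- key abstract uniqueness lemma: equal increments, equal sum mod `N = n*M`,
and last values `< M` force equality. -/
lemma agree (n M N : ℕ) (hn : 0 < n) (hN : N = n * M)
    (u v : ℕ → ℕ)
    (humono : ∀ k, k + 1 < n → u (k + 1) ≤ u k)
    (hvmono : ∀ k, k + 1 < n → v (k + 1) ≤ v k)
    (hub : u (n - 1) < M) (hvb : v (n - 1) < M)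
    (hdiff : ∀ k, k < n - 1 → u k - u (k + 1) = v k - v (k + 1))
    (hsum : ((∑ k ∈ Finset.range n, u k : ℕ) : ZMod N)
      = ((∑ k ∈ Finset.range n, v k : ℕ) : ZMod N)) :
    ∀ k, k < n → u k = v k := by
  have stepA : ∀ d k, k + d + 1 = n → u k + v (n - 1) = v k + u (n - 1) := by
    intro d
    induction d with
    | zero =>
      intro k hk
      have : k = n - 1 := by omega
      subst this
      omega
    | succ d ih =>
      intro k hk
      have h1 := ih (k + 1) (by omega)
      have h2 := hdiff k (by omega)
      have h3 := humono k (by omega)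
      have h4 := hvmono k (by omega)
      omega
  have hA : ∀ k, k < n → u k + v (n - 1) = v k + u (n - 1) :=
    fun k hk => stepA (n - 1 - k) k (by omega)
  have hB : (∑ k ∈ Finset.range n, u k) + n * v (n - 1)
      = (∑ k ∈ Finset.range n, v k) + n * u (n - 1) := by
    have e1 : ∑ k ∈ Finset.range n, (u k + v (n - 1))
        = ∑ k ∈ Finset.range n, (v k + u (n - 1)) :=
      Finset.sum_congr rfl fun k hk => hA k (Finset.mem_range.mp hk)
    simp only [Finset.sum_add_distrib, Finset.sum_const, Finset.card_range,
      smul_eq_mul] at e1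
    exact e1
  have hM : 0 < M := by omega
  have hNpos : 0 < N := hN ▸ Nat.mul_pos hn hM
  haveI : NeZero N := ⟨hNpos.ne'⟩
  have hcast : ((n * v (n - 1) : ℕ) : ZMod N) = ((n * u (n - 1) : ℕ) : ZMod N) := by
    have hBc := congrArg (Nat.cast : ℕ → ZMod N) hB
    push_cast at hBc hsum ⊢
    linear_combination hBc - hsum
  have h1 : n * v (n - 1) < N := by
    rw [hN]
    exact (Nat.mul_lt_mul_left hn).mpr hvb
  have h2 : n * u (n - 1) < N := by
    rw [hN]
    exact (Nat.mul_lt_mul_left hn).mpr hub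
  have hval := congrArg ZMod.val hcast
  rw [ZMod.val_cast_of_lt h1, ZMod.val_cast_of_lt h2] at hval
  have hlast : u (n - 1) = v (n - 1) := by
    have := Nat.eq_of_mul_eq_mul_left hn hval
    omega
  intro k hk
  have := hA k hk
  omega

/-- `cardA j = r` as soon as some row overflows at level `j`. -/
lemma aux_full (r l : ℕ) (y : ℕ → ℕ) (hmono : IsYoung y)
    (hgap : y 0 - y (r - 1) ≤ l) (htop : y (r - 1) + 1 ≤ l) (j : ℕ)
    (h : 1 ≤ ((Finset.range r).filter (fun i' => j + 1 ≤ y i' - l)).card) :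
    ((Finset.range r).filter (fun i' => j + 1 ≤ min (y i') l)).card = r := by
  have hne : ((Finset.range r).filter (fun i' => j + 1 ≤ y i' - l)).Nonempty :=
    Finset.card_pos.mp (by omega)
  obtain ⟨i', hi'⟩ := hne
  rw [Finset.mem_filter, Finset.mem_range] at hi'
  have h0 : y i' ≤ y 0 := hmono 0 i' (Nat.zero_le _)
  have hr1 : j + 1 ≤ y (r - 1) := by omega
  have heq : (Finset.range r).filter (fun i'' => j + 1 ≤ min (y i'') l)
      = Finset.range r := by
    apply Finset.filter_true_of_mem
    intro x hx
    rw [Finset.mem_range] at hx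
    have := hmono x (r - 1) (by omega)
    omega
  rw [heq, Finset.card_range]

/-- sum of the affine transpose equals sum of the diagram. -/
lemma sum_transp (r l : ℕ) (hr : 1 ≤ r) (y : ℕ → ℕ) (hmono : IsYoung y)
    (hgap : y 0 - y (r - 1) ≤ l) (htop : y (r - 1) + 1 ≤ l) :
    ∑ j ∈ Finset.range l, transpAff r l y j = ∑ i ∈ Finset.range r, y i := by
  have key : ∀ j ∈ Finset.range l, transpAff r l y j
      = ∑ i ∈ Finset.range r,
          ((if j + 1 ≤ min (y i) l then 1 else 0) + (if j + 1 ≤ y i - l then 1 else 0)) := by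
    intro j hj
    rw [Finset.mem_range] at hj
    simp only [transpAff]
    rw [if_pos hj, Finset.card_filter, Finset.card_filter, ← Finset.sum_add_distrib]
  rw [Finset.sum_congr rfl key, Finset.sum_comm]
  apply Finset.sum_congr rfl
  intro i hi
  rw [Finset.mem_range] at hi
  rw [Finset.sum_add_distrib, ← Finset.card_filter, ← Finset.card_filter,
    count_range, count_range]
  have h0 : y i ≤ y 0 := hmono 0 i (Nat.zero_le _)
  omega

/-- the top entry of the transpose is `< r`. -/
lemma transp_top (r l : ℕ) (hr : 1 ≤ r) (hl : 1 ≤ l) (y : ℕ → ℕ) (hmono : IsYoung y)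
    (hgap : y 0 - y (r - 1) ≤ l) (htop : y (r - 1) + 1 ≤ l) :
    transpAff r l y (l - 1) < r := by
  have hl1 : l - 1 < l := by omega
  simp only [transpAff]
  rw [if_pos hl1]
  have hb : (Finset.range r).filter (fun i => l - 1 + 1 ≤ y i - l) = ∅ := by
    rw [Finset.filter_eq_empty_iff]
    intro i hi
    rw [Finset.mem_range] at hi
    have h0 : y i ≤ y 0 := hmono 0 i (Nat.zero_le _)
    omega
  have ha : (Finset.range r).filter (fun i => l - 1 + 1 ≤ min (y i) l)
      ⊆ Finset.range (r - 1) := by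
    intro x hx
    simp only [Finset.mem_filter, Finset.mem_range] at hx ⊢
    rcases eq_or_ne x (r - 1) with h | h
    · subst h; omega
    · omega
  have := Finset.card_le_card ha
  rw [Finset.card_range] at this
  rw [hb, Finset.card_empty]
  omega

/-- transpose is weakly decreasing where defined. -/
lemma transp_mono (r l : ℕ) (y : ℕ → ℕ) :
    ∀ k, k + 1 < l → transpAff r l y (k + 1) ≤ transpAff r l y k := by
  intro k hk
  simp only [transpAff]
  rw [if_pos hk, if_pos (by omega : k < l)]
  refine Nat.add_le_add ?_ ?_ <;> apply Finset.card_le_card <;> intro x hx <;>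
    simp only [Finset.mem_filter, Finset.mem_range] at hx ⊢ <;>
    exact ⟨hx.1, by omega⟩

/-- inversion: a diagram in `𝒴_{r,l}^{aff}` is recovered from its affine transpose. -/
lemma inv_transp (r l : ℕ) (hr : 1 ≤ r) (hl : 1 ≤ l) (y : ℕ → ℕ) (hY : IsYaff r l y)
    (i : ℕ) (hi : i < r) :
    y i = ((Finset.range l).filter (fun j => i + 1 ≤ min (transpAff r l y j) r)).card
        + ((Finset.range l).filter (fun j => r + i + 1 ≤ transpAff r l y j)).card := by
  obtain ⟨hmono, hzero, hgap, htop⟩ := hY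
  have hmin : ∀ p q : ℕ, p ≤ q → min (y q) l ≤ min (y p) l := by
    intro p q hpq; have := hmono p q hpq; omega
  have hsub : ∀ p q : ℕ, p ≤ q → y q - l ≤ y p - l := by
    intro p q hpq; have := hmono p q hpq; omega
  have haR : ∀ j : ℕ, ((Finset.range r).filter (fun i' => j + 1 ≤ min (y i') l)).card ≤ r := by
    intro j
    calc ((Finset.range r).filter (fun i' => j + 1 ≤ min (y i') l)).card
        ≤ (Finset.range r).card := Finset.card_filter_le _ _
      _ = r := Finset.card_range r
  have K1 : ∀ j ∈ Finset.range l,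
      (i + 1 ≤ min (transpAff r l y j) r) ↔ (j + 1 ≤ min (y i) l) := by
    intro j hj
    rw [Finset.mem_range] at hj
    have ht : transpAff r l y j
        = ((Finset.range r).filter (fun i' => j + 1 ≤ min (y i') l)).card
        + ((Finset.range r).filter (fun i' => j + 1 ≤ y i' - l)).card := by
      simp only [transpAff]; rw [if_pos hj]
    rw [ht]
    have hc : (i + 1 ≤ ((Finset.range r).filter (fun i' => j + 1 ≤ min (y i') l)).card)
        ↔ j + 1 ≤ min (y i) l := conj_iff r (j + 1) i hi _ hmin
    rcases Nat.eq_zero_or_pos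
        (((Finset.range r).filter (fun i' => j + 1 ≤ y i' - l)).card) with h0 | h1
    · have hR := haR j
      constructor
      · intro hle
        exact hc.mp (by omega)
      · intro hle
        have := hc.mpr hle
        omega
    · have hfull := aux_full r l y hmono hgap htop j h1
      constructor
      · intro _
        exact hc.mp (by omega)
      · intro _
        have := haR j
        omega
  have K2 : ∀ j ∈ Finset.range l,
      (r + i + 1 ≤ transpAff r l y j) ↔ (j + 1 ≤ y i - l) := by
    intro j hj
    rw [Finset.mem_range] at hj
    have ht : transpAff r l y j
        = ((Finset.range r).filter (fun i' => j + 1 ≤ min (y i') l)).card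
        + ((Finset.range r).filter (fun i' => j + 1 ≤ y i' - l)).card := by
      simp only [transpAff]; rw [if_pos hj]
    rw [ht]
    have hc : (i + 1 ≤ ((Finset.range r).filter (fun i' => j + 1 ≤ y i' - l)).card)
        ↔ j + 1 ≤ y i - l := conj_iff r (j + 1) i hi _ hsub
    constructor
    · intro h
      have := haR j
      exact hc.mp (by omega)
    · intro h
      have hcb : i + 1 ≤ ((Finset.range r).filter (fun i' => j + 1 ≤ y i' - l)).card :=
        hc.mpr h
      have hfull := aux_full r l y hmono hgap htop j (by omega)
      omega
  rw [Finset.filter_congr K1, Finset.filter_congr K2, count_range, count_range]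
  have h0 : y i ≤ y 0 := hmono 0 i (Nat.zero_le _)
  omega

/-- For an admissible triple `(λ₀, μ₁, μ₂)` the witnessing diagram
`Y ∈ 𝒴_{r,l}^{aff}` is uniquely determined by `(λ₀, μ₁)`, and also by
`(λ₀, μ₂)`. -/
theorem witness_unique (r l : ℕ) (hr : 2 ≤ r) (hl : 2 ≤ l) :
    (∀ y z : ℕ → ℕ, IsYaff r l y → IsYaff r l z →
      ((∑ i ∈ Finset.range r, y i : ZMod (r * l))
        = (∑ i ∈ Finset.range r, z i : ZMod (r * l))) →
      (∀ i, i < r - 1 → y i - y (i + 1) = z i - z (i + 1)) →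
      y = z) ∧
    (∀ y z : ℕ → ℕ, IsYaff r l y → IsYaff r l z →
      ((∑ i ∈ Finset.range r, y i : ZMod (r * l))
        = (∑ i ∈ Finset.range r, z i : ZMod (r * l))) →
      (∀ j, j < l - 1 →
        transpAff r l y j - transpAff r l y (j + 1)
          = transpAff r l z j - transpAff r l z (j + 1)) →
      y = z) := by
  constructor
  · intro y z hy hz hsum hdiff
    obtain ⟨hym, hyz, hyg, hyt⟩ := hy
    obtain ⟨hzm, hzz, hzg, hzt⟩ := hz
    have hsum' : ((∑ i ∈ Finset.range r, y i : ℕ) : ZMod (r * l))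
        = ((∑ i ∈ Finset.range r, z i : ℕ) : ZMod (r * l)) := by
      push_cast
      exact hsum
    have key := agree r l (r * l) (by omega) rfl y z
      (fun k hk => hym k (k + 1) (by omega)) (fun k hk => hzm k (k + 1) (by omega))
      (by omega) (by omega) hdiff hsum'
    funext i
    rcases lt_or_ge i r with h | h
    · exact key i h
    · rw [hyz i h, hzz i h]
  · intro y z hy hz hsum hdiff
    obtain ⟨hym, hyz, hyg, hyt⟩ := hy
    obtain ⟨hzm, hzz, hzg, hzt⟩ := hz
    have hsy := sum_transp r l (by omega) y hym hyg hyt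
    have hsz := sum_transp r l (by omega) z hzm hzg hzt
    have hsum' : ((∑ j ∈ Finset.range l, transpAff r l y j : ℕ) : ZMod (r * l))
        = ((∑ j ∈ Finset.range l, transpAff r l z j : ℕ) : ZMod (r * l)) := by
      rw [hsy, hsz]
      push_cast
      exact hsum
    have key := agree l r (r * l) (by omega) (Nat.mul_comm r l)
      (transpAff r l y) (transpAff r l z)
      (transp_mono r l y) (transp_mono r l z)
      (transp_top r l (by omega) (by omega) y hym hyg hyt)
      (transp_top r l (by omega) (by omega) z hzm hzg hzt)
      hdiff hsum'
    have ht : transpAff r l y = transpAff r l z := by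
      funext j
      rcases lt_or_ge j l with h | h
      · exact key j h
      · simp only [transpAff]
        rw [if_neg (by omega), if_neg (by omega)]
    funext i
    rcases lt_or_ge i r with h | h
    · rw [inv_transp r l (by omega) (by omega) y ⟨hym, hyz, hyg, hyt⟩ i h, ht,
        ← inv_transp r l (by omega) (by omega) z ⟨hzm, hzz, hzg, hzt⟩ i h]
    · rw [hyz i h, hzz i h]
end

section
/- For Y ∈ Y_{r,l}^aff \ Y_{r,l}^fin, writing Y = Y_1 ∪ Y_2 with (Y_1)_i = min(l, y_i) and (Y_2)_i = max(y_i - l, 0), both Y_1 and Y_2 belong to Y_{r,l}^fin, and moreover (Y_2)_1 ≤ (Y_1)_r, so that the columns of ^tY_2 fit below those of ^tY_1; in particular ^tY defined by (^tY)_j = (^tY_1)_j + (^tY_2)_j is a weakly decreasing sequence lying in Y_{l,r}^aff. -/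
def IsYfin (r l : ℕ) (y : ℕ → ℕ) : Prop := IsYaff r l y ∧ y 0 ≤ l

/-- Transpose (conjugate) of a diagram of type (r,l). -/
def transp (r l : ℕ) (y : ℕ → ℕ) : ℕ → ℕ :=
  fun j => if j < l then ((Finset.range r).filter (fun i => j + 1 ≤ y i)).card else 0

lemma transp_antitone (r l : ℕ) (y : ℕ → ℕ) :
    ∀ i j : ℕ, i ≤ j → transp r l y j ≤ transp r l y i := by
  intro i j hij
  unfold transp
  by_cases hj : j < l
  · rw [if_pos hj, if_pos (lt_of_le_of_lt hij hj)]
    apply Finset.card_le_card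
    intro x hx
    obtain ⟨hx1, hx2⟩ := Finset.mem_filter.mp hx
    exact Finset.mem_filter.mpr ⟨hx1, by omega⟩
  · rw [if_neg hj]
    exact Nat.zero_le _

lemma transp_eq_zero (r l : ℕ) (y : ℕ → ℕ) (j : ℕ) (hj : l ≤ j) :
    transp r l y j = 0 := by
  unfold transp
  rw [if_neg (by omega)]

/-- For `Y ∈ 𝒴_{r,l}^{aff} \ 𝒴_{r,l}^{fin}`, writing `Y = Y₁ ∪ Y₂` with
`(Y₁)_i = min(l, y_i)` and `(Y₂)_i = max(y_i - l, 0)`: both `Y₁, Y₂` lie in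
`𝒴_{r,l}^{fin}`, `(Y₂)_1 ≤ (Y₁)_r`, and `^tY := ^tY₁ ∪ ^tY₂` (columnwise sum)
is a weakly decreasing sequence lying in `𝒴_{l,r}^{aff}`. -/
theorem split_aff_not_fin (r l : ℕ) (hr : 1 ≤ r) (hl : 1 ≤ l) :
    ∀ y : ℕ → ℕ, IsYaff r l y → ¬ y 0 ≤ l →
      IsYfin r l (fun i => min l (y i)) ∧
      IsYfin r l (fun i => y i - l) ∧
      (y 0 - l ≤ min l (y (r - 1))) ∧
      IsYaff l r (fun j => transp r l (fun i => min l (y i)) j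
        + transp r l (fun i => y i - l) j) := by
  intro y hy hne
  obtain ⟨hY, h0, h1, h2⟩ := hy
  have hr1 : y (r - 1) ≤ y 0 := hY 0 (r - 1) (Nat.zero_le _)
  have hybd : ∀ i, y i ≤ y 0 := fun i => hY 0 i (Nat.zero_le _)
  refine ⟨⟨⟨?_, ?_, ?_, ?_⟩, ?_⟩, ⟨⟨?_, ?_, ?_, ?_⟩, ?_⟩, ?_, ?_, ?_, ?_, ?_⟩
  · intro i j hij
    have := hY i j hij
    simp only
    omega
  · intro i hi
    have := h0 i hi
    simp only [this]
    omega
  · simp only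
    omega
  · simp only
    omega
  · simp only
    omega
  · intro i j hij
    have := hY i j hij
    simp only
    omega
  · intro i hi
    have := h0 i hi
    simp only [this]
    omega
  · simp only
    omega
  · simp only
    omega
  · simp only
    omega
  · omega
  -- monotonicity of the column sums
  · intro i j hij
    exact Nat.add_le_add (transp_antitone r l _ i j hij) (transp_antitone r l _ i j hij)
  -- vanishing for j ≥ l
  · intro j hj
    simp only [transp_eq_zero r l _ j hj]
  -- the two remaining arithmetic conditions about column l-1 and column 0
  · -- T 0 - T (l-1) ≤ r
    have hlt : l - 1 < l := by omega
    have hsucc : l - 1 + 1 = l := by omega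
    set A := (Finset.range r).filter (fun i => l - 1 + 1 ≤ min l (y i)) with hA
    have hT1 : transp r l (fun i => min l (y i)) (l - 1) = A.card := by
      unfold transp; rw [if_pos hlt]
    have hT0a : transp r l (fun i => min l (y i)) 0 ≤ r := by
      unfold transp
      rw [if_pos (show 0 < l by omega)]
      calc ((Finset.range r).filter (fun i => 0 + 1 ≤ min l (y i))).card
          ≤ (Finset.range r).card := Finset.card_le_card (Finset.filter_subset _ _)
        _ = r := Finset.card_range r
    have hT0b : transp r l (fun i => y i - l) 0 ≤ A.card := by
      unfold transp
      rw [if_pos (show 0 < l by omega)]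
      apply Finset.card_le_card
      rw [hA]
      intro x hx
      obtain ⟨hx1, hx2⟩ := Finset.mem_filter.mp hx
      refine Finset.mem_filter.mpr ⟨hx1, ?_⟩
      simp only at hx2 ⊢
      omega
    have hT1' : transp r l (fun i => y i - l) (l - 1) = transp r l (fun i => y i - l) (l - 1) := rfl
    simp only
    omega
  · -- T (l-1) + 1 ≤ r
    have hlt : l - 1 < l := by omega
    have hB : ((Finset.range r).filter (fun i => l - 1 + 1 ≤ y i - l)) = ∅ := by
      apply Finset.filter_false_of_mem
      intro x _
      have := hybd x
      omega
    have hT2 : transp r l (fun i => y i - l) (l - 1) = 0 := by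
      unfold transp
      rw [if_pos hlt, hB, Finset.card_empty]
    have hT1 : transp r l (fun i => min l (y i)) (l - 1) < r := by
      unfold transp
      rw [if_pos hlt]
      have hss : (Finset.range r).filter (fun i => l - 1 + 1 ≤ min l (y i)) ⊂ Finset.range r := by
        rw [Finset.ssubset_iff_of_subset (Finset.filter_subset _ _)]
        refine ⟨r - 1, Finset.mem_range.mpr (by omega), ?_⟩
        simp only [Finset.mem_filter]
        intro h
        have := h.2
        omega
      calc ((Finset.range r).filter (fun i => l - 1 + 1 ≤ min l (y i))).card
          < (Finset.range r).card := Finset.card_lt_card hss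
        _ = r := Finset.card_range r
    simp only
    omega
end
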